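/- If (α, β) is uniform with density 2/π² on {0 < α, 0 < β, α + β < π}, then (h, k) = (cot(α/2), cot(β/2)) has joint density (8/π²)·1/((h²+1)(k²+1)) on the region {h > 0, k > 0, hk > 1}. -/

import Mathlib

/-!
The map `(α, β) ↦ (cot (α / 2), cot (β / 2))` is injective on the triangle, with inverse
`h ↦ 2 arctan h⁻¹` in each coordinate, and maps it onto `{h > 0, k > 0, hk > 1}` because
`cot a cot b - 1 = cos (a + b) / (sin a sin b)`. Since
`d/dt cot (t / 2) = -(cot (t / 2) ^ 2 + 1) / 2`, its Jacobian is `(h² + 1)(k² + 1) / 4`, and the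
change of variables formula turns the constant density `2 / π²` into
`8 / π² / ((h² + 1)(k² + 1))`.
-/

open MeasureTheory Set Real
open scoped ENNReal

theorem ContinuousLinearMap.det_prodMap {R M N : Type*} [CommRing R]
    [TopologicalSpace M] [AddCommGroup M] [Module R M] [Module.Free R M] [Module.Finite R M]
    [TopologicalSpace N] [AddCommGroup N] [Module R N] [Module.Free R N] [Module.Finite R N]
    (f : M →L[R] M) (g : N →L[R] N) : (f.prodMap g).det = f.det * g.det :=
  LinearMap.det_prodMap (f : M →ₗ[R] M) (g : N →ₗ[R] N)

theorem ENNReal.ofReal_ite_eq_indicator {α : Type*} (p : α → Prop) [DecidablePred p]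
    (f : α → ℝ) :
    (fun x => ENNReal.ofReal (if p x then f x else 0)) =
      {x | p x}.indicator fun x => ENNReal.ofReal (f x) := by
  ext x
  by_cases h : p x <;> simp [h]

theorem MeasureTheory.map_withDensity_indicator_eq_withDensity_indicator_image
    {E : Type*} [NormedAddCommGroup E] [NormedSpace ℝ E] [FiniteDimensional ℝ E]
    [MeasurableSpace E] [BorelSpace E] (μ : Measure E) [μ.IsAddHaarMeasure]
    {s : Set E} {f : E → E} {f' : E → E →L[ℝ] E} {g ρ : E → ℝ≥0∞}
    (hs : MeasurableSet s) (hf : Measurable f) (hf' : ∀ x ∈ s, HasFDerivWithinAt f (f' x) s x)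
    (hinj : InjOn f s) (hg : ∀ x ∈ s, g x = ENNReal.ofReal |(f' x).det| * ρ (f x)) :
    Measure.map f (μ.withDensity (s.indicator g)) = μ.withDensity ((f '' s).indicator ρ) := by
  ext A hA
  have hsA : MeasurableSet (s ∩ f ⁻¹' A) := hs.inter (hf hA)
  rw [Measure.map_apply hf hA, withDensity_apply _ (hf hA), withDensity_apply _ hA,
    setLIntegral_indicator hs,
    setLIntegral_indicator (measurable_image_of_fderivWithin hs hf' hinj),
    ← image_inter_preimage, lintegral_image_eq_lintegral_abs_det_fderiv_mul μ hsA
      (fun x hx => (hf' x hx.1).mono inter_subset_left) (hinj.mono inter_subset_left)]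
  exact setLIntegral_congr_fun hsA fun x hx => hg x hx.1

namespace Real

theorem cot_eq_cos_div_sin' : cot = cos / sin := funext cot_eq_cos_div_sin

theorem measurable_cot : Measurable cot :=
  cot_eq_cos_div_sin' ▸ measurable_cos.div measurable_sin

theorem cot_sq_add_one {x : ℝ} (hx : sin x ≠ 0) : cot x ^ 2 + 1 = (sin x ^ 2)⁻¹ := by
  rw [cot_eq_cos_div_sin]
  field_simp
  linarith [sin_sq_add_cos_sq x]

theorem hasDerivAt_cot {x : ℝ} (hx : sin x ≠ 0) : HasDerivAt cot (-(sin x ^ 2)⁻¹) x := by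
  rw [cot_eq_cos_div_sin']
  refine ((hasDerivAt_cos x).div (hasDerivAt_sin x) hx).congr_deriv ?_
  rw [← one_div, ← sin_sq_add_cos_sq x]
  ring

theorem hasDerivAt_cot_div_two {t : ℝ} (ht : sin (t / 2) ≠ 0) :
    HasDerivAt (fun t => cot (t / 2)) (-(cot (t / 2) ^ 2 + 1) / 2) t := by
  have h := (hasDerivAt_cot ht).comp t ((hasDerivAt_id t).div_const 2)
  rwa [mul_one_div, ← cot_sq_add_one ht] at h

-- Also true at `x = 0`, where both sides are the junk value `0`.
theorem cot_arctan (x : ℝ) : cot (arctan x) = x⁻¹ := by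
  rw [cot_eq_cos_div_sin, cos_arctan, sin_arctan,
    div_div_div_cancel_right₀ (by positivity : √(1 + x ^ 2) ≠ 0), one_div]

theorem arctan_inv_cot {x : ℝ} (h₁ : -(π / 2) < x) (h₂ : x < π / 2) :
    arctan (cot x)⁻¹ = x := by
  rw [cot_eq_cos_div_sin, inv_div, ← tan_eq_sin_div_cos, arctan_tan h₁ h₂]

theorem leftInvOn_cot_div_two :
    LeftInvOn (fun h => 2 * arctan h⁻¹) (fun t => cot (t / 2)) (Ioo 0 π) := fun t ht => by
  simp only
  rw [arctan_inv_cot (by linarith [ht.1, pi_pos]) (by linarith [ht.2])]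
  ring

theorem cot_pos_of_mem_Ioo {x : ℝ} (hx : x ∈ Ioo 0 (π / 2)) : 0 < cot x := by
  rw [cot_eq_cos_div_sin]
  exact div_pos (cos_pos_of_mem_Ioo ⟨by linarith [hx.1, pi_pos], hx.2⟩)
    (sin_pos_of_pos_of_lt_pi hx.1 (by linarith [hx.2, pi_pos]))

theorem one_lt_cot_mul_cot {a b : ℝ} (ha : 0 < a) (hb : 0 < b) (hab : a + b < π / 2) :
    1 < cot a * cot b := by
  have hsa := sin_pos_of_pos_of_lt_pi ha (by linarith [pi_pos])
  have hsb := sin_pos_of_pos_of_lt_pi hb (by linarith [pi_pos])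
  have hcos : 0 < cos (a + b) := cos_pos_of_mem_Ioo ⟨by linarith [pi_pos], hab⟩
  rw [cos_add] at hcos
  rw [cot_eq_cos_div_sin, cot_eq_cos_div_sin, div_mul_div_comm, one_lt_div (by positivity)]
  linarith

theorem image_cot_div_two_triangle :
    (fun p : ℝ × ℝ => (cot (p.1 / 2), cot (p.2 / 2))) ''
        {p | 0 < p.1 ∧ 0 < p.2 ∧ p.1 + p.2 < π} =
      {q | 0 < q.1 ∧ 0 < q.2 ∧ 1 < q.1 * q.2} := by
  ext ⟨h, k⟩
  constructor
  · rintro ⟨⟨a, b⟩, ⟨ha, hb, hab⟩, hq⟩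
    obtain ⟨rfl, rfl⟩ := Prod.mk.inj hq
    exact ⟨cot_pos_of_mem_Ioo ⟨by linarith, by linarith⟩,
      cot_pos_of_mem_Ioo ⟨by linarith, by linarith⟩,
      one_lt_cot_mul_cot (by linarith) (by linarith) (by linarith)⟩
  · rintro ⟨hh, hk, hhk⟩
    refine ⟨(2 * arctan h⁻¹, 2 * arctan k⁻¹), ⟨?_, ?_, ?_⟩, ?_⟩
    · simp [arctan_pos, hh]
    · simp [arctan_pos, hk]
    · have hlt : h⁻¹ * k⁻¹ < 1 := by rw [← mul_inv]; exact inv_lt_one_of_one_lt₀ hhk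
      have := arctan_add_arctan_lt_pi_div_two hlt
      simp only
      linarith
    · simp [cot_arctan]

theorem sin_div_two_ne_zero {t : ℝ} (ht : t ∈ Ioo 0 π) : sin (t / 2) ≠ 0 :=
  (sin_pos_of_pos_of_lt_pi (by linarith [ht.1]) (by linarith [ht.2, pi_pos])).ne'

end Real

open ContinuousLinearMap

theorem ofReal_abs_det_prodMap_mul_density (h k : ℝ) :
    ENNReal.ofReal |((toSpanSingleton ℝ (-(h ^ 2 + 1) / 2)).prodMap
        (toSpanSingleton ℝ (-(k ^ 2 + 1) / 2))).det| *
      ENNReal.ofReal (8 / π ^ 2 * (1 / (h ^ 2 + 1)) * (1 / (k ^ 2 + 1))) =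
      ENNReal.ofReal (2 / π ^ 2) := by
  rw [det_prodMap, det_toSpanSingleton, det_toSpanSingleton, ← ENNReal.ofReal_mul (abs_nonneg _),
    neg_div, neg_div, neg_mul_neg, abs_of_pos (by positivity)]
  congr 1
  field_simp
  norm_num

theorem stmt_10 :
    Measure.map (fun p : ℝ × ℝ => (Real.cot (p.1 / 2), Real.cot (p.2 / 2)))
      ((volume : Measure (ℝ × ℝ)).withDensity fun p =>
        ENNReal.ofReal (if 0 < p.1 ∧ 0 < p.2 ∧ p.1 + p.2 < Real.pi
          then 2 / Real.pi ^ 2 else 0)) =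
      (volume : Measure (ℝ × ℝ)).withDensity fun q =>
        ENNReal.ofReal (if 0 < q.1 ∧ 0 < q.2 ∧ 1 < q.1 * q.2
          then (8 / Real.pi ^ 2) * (1 / (q.1 ^ 2 + 1)) * (1 / (q.2 ^ 2 + 1))
          else 0) := by
  set S : Set (ℝ × ℝ) := {p | 0 < p.1 ∧ 0 < p.2 ∧ p.1 + p.2 < π}
  have hS : MeasurableSet S := by measurability
  have hS_sub : S ⊆ Ioo 0 π ×ˢ Ioo 0 π := fun p ⟨h1, h2, h12⟩ =>
    ⟨⟨h1, by linarith⟩, h2, by linarith⟩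
  have hcot : Measurable fun t => cot (t / 2) := measurable_cot.comp (measurable_id.div_const 2)
  have key := map_withDensity_indicator_eq_withDensity_indicator_image volume hS
    (f := fun p => (cot (p.1 / 2), cot (p.2 / 2)))
    (f' := fun p => (toSpanSingleton ℝ (-(cot (p.1 / 2) ^ 2 + 1) / 2)).prodMap
      (toSpanSingleton ℝ (-(cot (p.2 / 2) ^ 2 + 1) / 2)))
    (g := fun _ => ENNReal.ofReal (2 / π ^ 2))
    (ρ := fun q => ENNReal.ofReal (8 / π ^ 2 * (1 / (q.1 ^ 2 + 1)) * (1 / (q.2 ^ 2 + 1))))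
    ((hcot.comp measurable_fst).prodMk (hcot.comp measurable_snd))
    (fun p hp =>
      ((hasDerivAt_cot_div_two (sin_div_two_ne_zero (hS_sub hp).1)).hasFDerivAt.prodMap p
        (hasDerivAt_cot_div_two (sin_div_two_ne_zero (hS_sub hp).2)).hasFDerivAt).hasFDerivWithinAt)
    ((leftInvOn_cot_div_two.injOn.prodMap leftInvOn_cot_div_two.injOn).mono hS_sub)
    (fun p _ => (ofReal_abs_det_prodMap_mul_density _ _).symm)
  rw [image_cot_div_two_triangle] at key
  rw [ENNReal.ofReal_ite_eq_indicator fun p : ℝ × ℝ => 0 < p.1 ∧ 0 < p.2 ∧ p.1 + p.2 < π,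
    ENNReal.ofReal_ite_eq_indicator fun q : ℝ × ℝ => 0 < q.1 ∧ 0 < q.2 ∧ 1 < q.1 * q.2]
  exact key
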